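/- arXiv:2011.12904 — 4 statements merged into one kernel-verified Lean document; each statement's English description precedes it below -/
import Mathlib

section
/- Let d ≥ 3, w > 0, and let c be the unique positive root of c² + c(2w + d − 2) − 2w = 0. Define r = (d−1)c/(2w+c), q₁ = (2w+c)c/(2w+2c), K = d(2w+c)²/((2w+2c)(d−1)²), and q_m = K·r^m for m ≥ 2. Then q₁ + Σ_{m=2}^∞ q_m = 1. -/
/-! The root equation says exactly that `1 - r = c`, so the geometric tail sums to
`K r² / c = d c / (2w + 2c)`, and `q₁ + d c / (2w + 2c) = 1` is the root equation again. -/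

theorem tsum_mul_pow_add_two {r : ℝ} (hr : |r| < 1) (K : ℝ) :
    ∑' m : ℕ, K * r ^ (m + 2) = K * r ^ 2 / (1 - r) := by
  simp_rw [pow_add, mul_comm (r ^ _) (r ^ 2), ← mul_assoc]
  rw [tsum_mul_left, tsum_geometric_of_abs_lt_one hr, div_eq_mul_inv]

theorem one_sub_div_eq_of_root {d w c : ℝ} (hroot : c ^ 2 + c * (2 * w + d - 2) - 2 * w = 0)
    (hden : 2 * w + c ≠ 0) : 1 - (d - 1) * c / (2 * w + c) = c := by
  field_simp
  linear_combination -hroot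

/-- Let `d ≥ 3`, `w > 0`, and `c` the unique positive root of
`c² + c(2w + d − 2) − 2w = 0`. With `r = (d−1)c/(2w+c)`,
`q₁ = (2w+c)c/(2w+2c)`, `K = d(2w+c)²/((2w+2c)(d−1)²)` and `q_m = K·r^m`
for `m ≥ 2`, one has `q₁ + Σ_{m=2}^∞ q_m = 1`. -/
theorem stmt_7 (d : ℕ) (hd : 3 ≤ d) (w : ℝ) (hw : 0 < w) (c : ℝ) (hc : 0 < c)
    (hroot : c ^ 2 + c * (2 * w + d - 2) - 2 * w = 0)
    (r q₁ K : ℝ)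
    (hr : r = ((d : ℝ) - 1) * c / (2 * w + c))
    (hq₁ : q₁ = (2 * w + c) * c / (2 * w + 2 * c))
    (hK : K = d * (2 * w + c) ^ 2 / ((2 * w + 2 * c) * ((d : ℝ) - 1) ^ 2)) :
    q₁ + ∑' m : ℕ, K * r ^ (m + 2) = 1 := by
  have hd1 : (0 : ℝ) < d - 1 := by
    have : (3 : ℝ) ≤ d := by exact_mod_cast hd
    linarith
  have hden : 0 < 2 * w + c := by positivity
  have h1r : 1 - r = c := hr ▸ one_sub_div_eq_of_root hroot hden.ne'
  have hr_abs : |r| < 1 := by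
    rw [abs_lt]
    constructor
    · rw [hr]; linarith [show 0 ≤ ((d : ℝ) - 1) * c / (2 * w + c) by positivity]
    · linarith
  rw [tsum_mul_pow_add_two hr_abs, h1r, hq₁, hK, hr]
  field_simp
  linear_combination hroot
end

section
/- Let d ≥ 3 and w > 0. Define c_n = a'_n/a_n where a_n, a'_n are the spanning-tree counts of the perfect-tree product satisfying a'_n = w(2a_{n-1} + a'_{n-1}/w)^{d-1} and a_n = a'_n + (d-1)a_{n-1}(2a_{n-1} + a'_{n-1}/w)^{d-2}, with a_0 = a'_0 = w. Then c_n satisfies the recursion c_n = 1/(1 + (d−1)/(2w + c_{n−1})), the sequence c_n is monotone and lies in [0,1], and hence converges; its limit c is the unique positive root of c² + c(2w+d−2) − 2w = 0. -/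
open Filter Set

/- Dividing both recursions by `(2 a_n + a'_n / w) ^ (d - 2)` shows that the ratio `c_n = a'_n / a_n`
evolves by `c_{n+1} = f(c_n)` with `f x = (2w + x) / (2w + x + (d - 1))`. On `[0, ∞)` the map `f` is
increasing with values in `[0, 1]`, and `c_1 = f(1) ≤ 1 = c_0`, so the orbit of `1` decreases and
converges to a fixed point of `f`, i.e. a root of `c² + c(2w + d - 2) - 2w = 0`; `0` is not a root. -/

theorem MonotoneOn.antitone_iterate_of_map_le {α : Type*} [Preorder α] {f : α → α} {s : Set α}
    (hf : MonotoneOn f s) (hs : MapsTo f s s) {x : α} (hx : x ∈ s) (hfx : f x ≤ x) :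
    Antitone fun n => f^[n] x := by
  refine antitone_nat_of_succ_le fun n => ?_
  induction n with
  | zero => exact hfx
  | succ n ih =>
    have h := hf (hs.iterate (n + 1) hx) (hs.iterate n hx) ih
    rwa [← Function.iterate_succ_apply' f (n + 1), ← Function.iterate_succ_apply' f n] at h

noncomputable def treeRatioMap (k w x : ℝ) : ℝ := 1 / (1 + k / (2 * w + x))

section TreeRatioMap

variable {k w : ℝ}

theorem treeRatioMap_eq {x : ℝ} (hx : 0 < 2 * w + x) :
    treeRatioMap k w x = (2 * w + x) / (2 * w + x + k) := by
  unfold treeRatioMap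
  field_simp

theorem treeRatioMap_mem_Icc (hk : 0 ≤ k) (hw : 0 < w) {x : ℝ} (hx : 0 ≤ x) :
    treeRatioMap k w x ∈ Icc 0 1 := by
  rw [treeRatioMap_eq (by positivity)]
  exact ⟨by positivity, div_le_one_of_le₀ (by linarith) (by positivity)⟩

theorem monotoneOn_treeRatioMap (hk : 0 ≤ k) (hw : 0 < w) :
    MonotoneOn (treeRatioMap k w) (Ici 0) := by
  intro x (hx : 0 ≤ x) y (hy : 0 ≤ y) hxy
  have : 0 < 2 * w + x := by positivity
  have : 0 < 1 + k / (2 * w + y) := by positivity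
  unfold treeRatioMap
  gcongr

theorem continuousAt_treeRatioMap (hk : 0 ≤ k) (hw : 0 < w) {x : ℝ} (hx : 0 ≤ x) :
    ContinuousAt (treeRatioMap k w) x := by
  unfold treeRatioMap
  have : 2 * w + x ≠ 0 := by positivity
  have : 1 + k / (2 * w + x) ≠ 0 := by positivity
  fun_prop (disch := assumption)

theorem treeRatioMap_eq_self_iff (hk : 0 ≤ k) (hw : 0 < w) {c : ℝ} (hc : 0 ≤ c) :
    treeRatioMap k w c = c ↔ c ^ 2 + c * (2 * w + k - 1) - 2 * w = 0 := by
  have : 0 < 2 * w + c + k := by positivity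
  rw [treeRatioMap_eq (by positivity), div_eq_iff this.ne']
  constructor <;> intro h <;> linarith

theorem treeRatioMap_iterate_mem_Icc (hk : 0 ≤ k) (hw : 0 < w) (n : ℕ) :
    (treeRatioMap k w)^[n] 1 ∈ Icc 0 1 := by
  cases n with
  | zero => simp
  | succ n =>
    rw [Function.iterate_succ_apply']
    exact treeRatioMap_mem_Icc hk hw (treeRatioMap_iterate_mem_Icc hk hw n).1

theorem antitone_treeRatioMap_iterate (hk : 0 ≤ k) (hw : 0 < w) :
    Antitone fun n => (treeRatioMap k w)^[n] 1 :=
  (monotoneOn_treeRatioMap hk hw).antitone_iterate_of_map_le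
    (fun _ hx => (treeRatioMap_mem_Icc hk hw hx).1) (mem_Ici.2 zero_le_one)
    (treeRatioMap_mem_Icc hk hw zero_le_one).2

theorem exists_tendsto_treeRatioMap_iterate (hk : 0 ≤ k) (hw : 0 < w) :
    ∃ c : ℝ, Tendsto (fun n => (treeRatioMap k w)^[n] 1) atTop (nhds c) ∧ 0 < c ∧
      c ^ 2 + c * (2 * w + k - 1) - 2 * w = 0 := by
  obtain ⟨c, hlim⟩ : ∃ c, Tendsto (fun n => (treeRatioMap k w)^[n] 1) atTop (nhds c) :=
    ⟨_, tendsto_atTop_ciInf (antitone_treeRatioMap_iterate hk hw)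
      ⟨0, by rintro _ ⟨n, rfl⟩; exact (treeRatioMap_iterate_mem_Icc hk hw n).1⟩⟩
  have hc : 0 ≤ c := ge_of_tendsto' hlim fun n => (treeRatioMap_iterate_mem_Icc hk hw n).1
  have hroot := (treeRatioMap_eq_self_iff hk hw hc).1
    (isFixedPt_of_tendsto_iterate hlim (continuousAt_treeRatioMap hk hw hc))
  refine ⟨c, hlim, hc.lt_of_ne ?_, hroot⟩
  rintro rfl
  linarith

end TreeRatioMap

structure TreeProductCounts (d : ℕ) (w : ℝ) (a a' : ℕ → ℝ) : Prop where
  a_zero : a 0 = w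
  a'_zero : a' 0 = w
  a'_rec : ∀ n : ℕ, 1 ≤ n → a' n = w * (2 * a (n - 1) + a' (n - 1) / w) ^ (d - 1)
  a_rec : ∀ n : ℕ, 1 ≤ n →
    a n = a' n + ((d : ℝ) - 1) * a (n - 1) * (2 * a (n - 1) + a' (n - 1) / w) ^ (d - 2)

namespace TreeProductCounts

variable {d : ℕ} {w : ℝ} {a a' : ℕ → ℝ}

theorem pos (h : TreeProductCounts d w a a') (hd : 1 ≤ d) (hw : 0 < w) (n : ℕ) :
    0 < a n ∧ 0 < a' n := by
  have hk : (0 : ℝ) ≤ (d : ℝ) - 1 := sub_nonneg.2 (by exact_mod_cast hd)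
  induction n with
  | zero => exact ⟨h.a_zero ▸ hw, h.a'_zero ▸ hw⟩
  | succ n ih =>
    obtain ⟨han, ha'n⟩ := ih
    have ha'succ : 0 < a' (n + 1) := by
      rw [h.a'_rec (n + 1) (by omega), Nat.add_sub_cancel]
      positivity
    refine ⟨?_, ha'succ⟩
    rw [h.a_rec (n + 1) (by omega), Nat.add_sub_cancel]
    positivity

theorem ratio_succ (h : TreeProductCounts d w a a') (hd : 2 ≤ d) (hw : 0 < w) (n : ℕ) :
    a' (n + 1) / a (n + 1) = treeRatioMap ((d : ℝ) - 1) w (a' n / a n) := by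
  obtain ⟨han, ha'n⟩ := h.pos (by omega) hw n
  have hk : (0 : ℝ) ≤ (d : ℝ) - 1 := sub_nonneg.2 (by exact_mod_cast (by omega : 1 ≤ d))
  have hP : 0 < 2 * a n + a' n / w := by positivity
  rw [h.a_rec (n + 1) (by omega), h.a'_rec (n + 1) (by omega), Nat.add_sub_cancel,
    show d - 1 = d - 2 + 1 by omega, pow_succ, treeRatioMap_eq (by positivity)]
  field_simp

theorem ratio_eq_iterate (h : TreeProductCounts d w a a') (hd : 2 ≤ d) (hw : 0 < w) :
    (fun n => a' n / a n) = fun n => (treeRatioMap ((d : ℝ) - 1) w)^[n] 1 := by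
  funext n
  induction n with
  | zero => simp [h.a_zero, h.a'_zero, hw.ne']
  | succ n ih => rw [h.ratio_succ hd hw, ih, Function.iterate_succ_apply']

end TreeProductCounts

/-- With `a_0 = a'_0 = w` and the spanning-tree recursions
`a'_n = w(2a_{n-1} + a'_{n-1}/w)^{d-1}` and
`a_n = a'_n + (d-1)a_{n-1}(2a_{n-1} + a'_{n-1}/w)^{d-2}`, the sequence
`c_n = a'_n/a_n` satisfies `c_n = 1/(1 + (d−1)/(2w + c_{n−1}))`, is monotone,
lies in `[0,1]`, and converges to the unique positive root of
`c² + c(2w+d−2) − 2w = 0`. -/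
theorem stmt_9 (d : ℕ) (hd : 3 ≤ d) (w : ℝ) (hw : 0 < w) (a a' : ℕ → ℝ)
    (ha0 : a 0 = w) (ha'0 : a' 0 = w)
    (ha' : ∀ n : ℕ, 1 ≤ n → a' n = w * (2 * a (n - 1) + a' (n - 1) / w) ^ (d - 1))
    (ha : ∀ n : ℕ, 1 ≤ n →
      a n = a' n + ((d : ℝ) - 1) * a (n - 1) * (2 * a (n - 1) + a' (n - 1) / w) ^ (d - 2)) :
    (∀ n : ℕ, 1 ≤ n →
      a' n / a n = 1 / (1 + ((d : ℝ) - 1) / (2 * w + a' (n - 1) / a (n - 1)))) ∧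
    (Monotone (fun n => a' n / a n) ∨ Antitone (fun n => a' n / a n)) ∧
    (∀ n : ℕ, a' n / a n ∈ Set.Icc (0 : ℝ) 1) ∧
    (∃ c : ℝ, Tendsto (fun n => a' n / a n) atTop (nhds c) ∧ 0 < c ∧
      c ^ 2 + c * (2 * w + d - 2) - 2 * w = 0) := by
  have hk : (0 : ℝ) ≤ (d : ℝ) - 1 := sub_nonneg.2 (by exact_mod_cast (by omega : 1 ≤ d))
  have hcounts : TreeProductCounts d w a a' := ⟨ha0, ha'0, ha', ha⟩
  have hiter := hcounts.ratio_eq_iterate (by omega) hw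
  refine ⟨fun n hn => ?_, ?_, fun n => ?_, ?_⟩
  · obtain ⟨m, rfl⟩ := Nat.exists_eq_add_of_le' hn
    exact hcounts.ratio_succ (by omega) hw m
  · exact Or.inr (hiter ▸ antitone_treeRatioMap_iterate hk hw)
  · exact congrFun hiter n ▸ treeRatioMap_iterate_mem_Icc hk hw n
  · obtain ⟨c, hlim, hc, hroot⟩ := exists_tendsto_treeRatioMap_iterate hk hw
    exact ⟨c, hiter ▸ hlim, hc, by linarith⟩
end

section
/- Let (u_n) be a sequence of positive reals converging to u > 0. Then for every ε > 0 there exists N such that for all n > N and all k with 0 < k ≤ n, |(∏_{i=k}^{n} u_i)^{1/(n−k+1)} − u| < ε, i.e., the geometric means of all tail segments ending at n converge to u uniformly in the starting index. -/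
/-!
Taking logarithms turns geometric means into arithmetic means, so it suffices to show that the
averages of `log u_i` over `[k, n]` tend to `log u` uniformly in `k ≤ n`. Beyond some threshold
`M` every term is close to `log u`; the finitely many terms below `M` only enter when `k < M`,
and then they are spread over at least `n + 1 - M` indices.
-/

open Filter Topology Finset

/-- Pairs `(k, n)` stand for the segments `Icc k n`; convergence along this filter is convergence
as `n → ∞`, uniformly in the left end `k ≤ n`. -/
def segmentsAtTop : Filter (ℕ × ℕ) :=
  comap Prod.snd atTop ⊓ 𝓟 {p | p.1 ≤ p.2}

theorem eventually_segmentsAtTop {P : ℕ × ℕ → Prop} :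
    (∀ᶠ p in segmentsAtTop, P p) ↔ ∃ N, ∀ k n, N ≤ n → k ≤ n → P (k, n) := by
  simp only [segmentsAtTop, eventually_inf_principal, eventually_comap, eventually_atTop]
  constructor
  · rintro ⟨N, hN⟩
    exact ⟨N, fun k n hn hkn => hN n hn (k, n) rfl hkn⟩
  · rintro ⟨N, hN⟩
    exact ⟨N, fun n hn p hp hle => by subst hp; exact hN p.1 _ hn hle⟩

theorem cast_card_Icc {k n : ℕ} (hkn : k ≤ n) : (#(Icc k n) : ℝ) = n - k + 1 := by
  rw [Nat.card_Icc, Nat.cast_sub (by omega)]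
  push_cast
  ring

section Normed

variable {E : Type*} [SeminormedAddCommGroup E]

theorem norm_sum_Icc_le_sum_Ico_add {v : ℕ → E} {M : ℕ} {η : ℝ} (hv : ∀ i ≥ M, ‖v i‖ ≤ η)
    (k n : ℕ) : ‖∑ i ∈ Icc k n, v i‖ ≤ ∑ i ∈ Ico k M, ‖v i‖ + η * #(Icc k n) := by
  have hη : 0 ≤ η := (norm_nonneg _).trans (hv M le_rfl)
  calc ‖∑ i ∈ Icc k n, v i‖ ≤ ∑ i ∈ Icc k n, ‖v i‖ := norm_sum_le _ _
    _ = ∑ i ∈ (Icc k n).filter (· < M), ‖v i‖ + ∑ i ∈ (Icc k n).filter (¬ · < M), ‖v i‖ :=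
      (sum_filter_add_sum_filter_not _ _ _).symm
    _ ≤ ∑ i ∈ Ico k M, ‖v i‖ + η * #(Icc k n) := by
      gcongr
      · intro i hi
        simp only [mem_filter, mem_Icc, mem_Ico] at hi ⊢
        omega
      · calc ∑ i ∈ (Icc k n).filter (¬ · < M), ‖v i‖
            ≤ #((Icc k n).filter (¬ · < M)) • η :=
              sum_le_card_nsmul _ _ _ fun i hi => hv i (by simp only [mem_filter] at hi; omega)
          _ ≤ η * #(Icc k n) := by
              rw [nsmul_eq_mul, mul_comm]; gcongr; exact filter_subset _ _

theorem eventually_norm_sum_Icc_le {v : ℕ → E} (hv : Tendsto v atTop (𝓝 0)) {ε : ℝ}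
    (hε : 0 < ε) :
    ∀ᶠ p in segmentsAtTop, ‖∑ i ∈ Icc p.1 p.2, v i‖ ≤ ε * ((p.2 : ℝ) - p.1 + 1) := by
  obtain ⟨M, hM⟩ := eventually_atTop.1
    ((NormedAddGroup.tendsto_nhds_zero.1 hv) (ε / 2) (half_pos hε))
  set C := ∑ i ∈ range M, ‖v i‖
  obtain ⟨N, hN⟩ := exists_nat_ge (M + 2 * C / ε)
  refine eventually_segmentsAtTop.2 ⟨N, fun k n hn hkn => ?_⟩
  have hsplit := norm_sum_Icc_le_sum_Ico_add (fun i hi => (hM i hi).le) k n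
  rw [cast_card_Icc hkn] at hsplit
  have hhead : ∑ i ∈ Ico k M, ‖v i‖ ≤ ε / 2 * ((n : ℝ) - k + 1) := by
    rcases le_or_gt M k with hMk | hkM
    · rw [Ico_eq_empty_of_le hMk, sum_empty]
      have : (k : ℝ) ≤ n := by exact_mod_cast hkn
      positivity
    · have hC : ∑ i ∈ Ico k M, ‖v i‖ ≤ C :=
        sum_le_sum_of_subset_of_nonneg
          (fun i hi => by simp only [mem_Ico, mem_range] at hi ⊢; omega) fun _ _ _ => norm_nonneg _
      have : (2 * C / ε) ≤ (n : ℝ) - k + 1 := by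
        have : (k : ℝ) ≤ M := by exact_mod_cast hkM.le
        have : (N : ℝ) ≤ n := by exact_mod_cast hn
        linarith
      calc _ ≤ C := hC
        _ = ε / 2 * (2 * C / ε) := by field_simp
        _ ≤ _ := by gcongr
  linarith

theorem tendsto_smul_sum_Icc_segmentsAtTop [NormedSpace ℝ E] {v : ℕ → E} {l : E}
    (hv : Tendsto v atTop (𝓝 l)) :
    Tendsto (fun p : ℕ × ℕ => ((p.2 : ℝ) - p.1 + 1)⁻¹ • ∑ i ∈ Icc p.1 p.2, v i)
      segmentsAtTop (𝓝 l) := by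
  rw [tendsto_iff_norm_sub_tendsto_zero, NormedAddGroup.tendsto_nhds_zero]
  intro ε hε
  filter_upwards [eventually_norm_sum_Icc_le (tendsto_sub_nhds_zero_iff.2 hv) (half_pos hε),
    (mem_inf_of_right (mem_principal_self _) :
      ∀ᶠ p in segmentsAtTop, p.1 ≤ p.2)] with ⟨k, n⟩ hsum hkn
  have hc : (0 : ℝ) < n - k + 1 := by
    have : (k : ℝ) ≤ n := by exact_mod_cast hkn
    linarith
  have : ((n : ℝ) - k + 1)⁻¹ • ∑ i ∈ Icc k n, v i - l
      = ((n : ℝ) - k + 1)⁻¹ • ∑ i ∈ Icc k n, (v i - l) := by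
    rw [sum_sub_distrib, sum_const, ← Nat.cast_smul_eq_nsmul ℝ, cast_card_Icc hkn, smul_sub,
      inv_smul_smul₀ hc.ne']
  rw [norm_norm, this, norm_smul, Real.norm_of_nonneg (inv_nonneg.2 hc.le),
    inv_mul_lt_iff₀ hc]
  nlinarith

end Normed

theorem Real.prod_rpow_eq_exp_mul_sum_log {ι : Type*} {s : Finset ι} {u : ι → ℝ}
    (hu : ∀ i ∈ s, 0 < u i) (y : ℝ) :
    (∏ i ∈ s, u i) ^ y = Real.exp (y * ∑ i ∈ s, Real.log (u i)) := by
  rw [Real.rpow_def_of_pos (prod_pos hu), Real.log_prod fun i hi => (hu i hi).ne', mul_comm]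

/-- If `(u_n)` is a sequence of positive reals converging to `u > 0`, then the
geometric means of all tail segments ending at `n` converge to `u` uniformly in
the starting index. -/
theorem stmt_11 (u : ℕ → ℝ) (hpos : ∀ n, 0 < u n) (l : ℝ) (hl : 0 < l)
    (hconv : Tendsto u atTop (nhds l)) :
    ∀ ε > 0, ∃ N : ℕ, ∀ n > N, ∀ k : ℕ, 0 < k → k ≤ n →
      |(∏ i ∈ Finset.Icc k n, u i) ^ ((1 : ℝ) / ((n : ℝ) - k + 1)) - l| < ε := by
  have hlog : Tendsto (fun i => Real.log (u i)) atTop (𝓝 (Real.log l)) := hconv.log hl.ne'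
  have hmean : Tendsto
      (fun p : ℕ × ℕ => (∏ i ∈ Icc p.1 p.2, u i) ^ ((1 : ℝ) / ((p.2 : ℝ) - p.1 + 1)))
      segmentsAtTop (𝓝 l) := by
    have := (Real.continuous_exp.tendsto _).comp (tendsto_smul_sum_Icc_segmentsAtTop hlog)
    rw [Real.exp_log hl] at this
    refine this.congr fun p => ?_
    simp only [Function.comp_apply, smul_eq_mul, one_div,
      Real.prod_rpow_eq_exp_mul_sum_log fun i _ => hpos i]
  intro ε hε
  obtain ⟨N, hN⟩ := eventually_segmentsAtTop.1 (Metric.tendsto_nhds.1 hmean ε hε)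
  exact ⟨N, fun n hn k _ hkn => hN k n hn.le hkn⟩
end

section
/- Let d ≥ 3, w > 0, c the unique positive root of c² + c(2w+d−2) − 2w = 0, and s = c/(w(2 + c/w)^{d−1}). Then (d−1)·s·(2 + c/w)^{d−2} = (d−1)c/(2w+c), and this quantity is strictly less than 1. -/
/-- With `c` the unique positive root of `c² + c(2w+d−2) − 2w = 0` and
`s = c/(w(2 + c/w)^{d−1})`, one has
`(d−1)·s·(2 + c/w)^{d−2} = (d−1)c/(2w+c) < 1`. -/
theorem stmt_16 (d : ℕ) (hd : 3 ≤ d) (w : ℝ) (hw : 0 < w) (c : ℝ) (hc : 0 < c)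
    (hroot : c ^ 2 + c * (2 * w + d - 2) - 2 * w = 0)
    (s : ℝ) (hs : s = c / (w * (2 + c / w) ^ (d - 1))) :
    ((d : ℝ) - 1) * s * (2 + c / w) ^ (d - 2) = ((d : ℝ) - 1) * c / (2 * w + c) ∧
    ((d : ℝ) - 1) * c / (2 * w + c) < 1 := by
  have hb : (0:ℝ) < 2 + c / w := by positivity
  have hbne : (2 + c / w) ≠ 0 := ne_of_gt hb
  have hd1 : d - 1 = (d - 2) + 1 := by omega
  have hwc : 0 < 2 * w + c := by linarith
  have hwce : w * (2 + c / w) = 2 * w + c := by field_simp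
  constructor
  · rw [hs, hd1, pow_succ]
    have hpne : (2 + c / w) ^ (d - 2) ≠ 0 := pow_ne_zero _ hbne
    field_simp
  · rw [div_lt_one hwc]
    have hd3 : (3:ℝ) ≤ (d:ℝ) := by exact_mod_cast hd
    have key : ((d:ℝ) - 2) * c < 2 * w := by nlinarith [sq_nonneg c, mul_pos hw hc]
    nlinarith
end
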